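/- arXiv:2405.12615 — 3 statements merged into one kernel-verified Lean document; each statement's English description precedes it below -/
import Mathlib

section
/- Let T be a transition kernel with independent transitions, T(s' | s, a) = ∏_{j=1}^{n_s} T_j(s'_j | s, a). For any two full-support joint probability mass functions p and q on (S, A, S') that are both consistent with T, and for every current-step coordinate X_i ∈ (S, A) and every next-step coordinate S'_j, the conditional independence X_i ⊥_p S'_j | ((S, A) \ {X_i}) holds if and only if X_i ⊥_q S'_j | ((S, A) \ {X_i}) holds. Hence the bipartite graph obtained by declaring X_i a parent of S'_j exactly when this conditional independence fails is the same for every consistent full-support distribution, i.e. it is the unique ground-truth causal graph identified by the conditional-independence rule. -/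
open Finset

noncomputable section

/-- Marginal probability that a configuration agrees with `x` on the coordinates in `E`. -/
def marg {V : Type*} [Fintype V] [DecidableEq V] {val : V → Type*}
    [∀ v, Fintype (val v)] [∀ v, DecidableEq (val v)]
    (p : (∀ v, val v) → ℝ) (E : Finset V) (x : ∀ v, val v) : ℝ :=
  ∑ y : ∀ v, val v, if ∀ v ∈ E, y v = x v then p y else 0

/-- Conditional probability of the value of coordinate `v` given the values of `P`. -/
def condP {V : Type*} [Fintype V] [DecidableEq V] {val : V → Type*}
    [∀ v, Fintype (val v)] [∀ v, DecidableEq (val v)]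
    (p : (∀ v, val v) → ℝ) (v : V) (P : Finset V) (x : ∀ v, val v) : ℝ :=
  marg p (insert v P) x / marg p P x

/-- Conditional independence X ⊥ Y | Z, in cross-multiplied form. -/
def CondIndep {V : Type*} [Fintype V] [DecidableEq V] {val : V → Type*}
    [∀ v, Fintype (val v)] [∀ v, DecidableEq (val v)]
    (p : (∀ v, val v) → ℝ) (X Y Z : Finset V) : Prop :=
  ∀ x : ∀ v, val v,
    marg p (X ∪ Y ∪ Z) x * marg p Z x = marg p (X ∪ Z) x * marg p (Y ∪ Z) x

/-- Variables of an FMDP: states, actions, next states. -/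
abbrev FVar (ns na : ℕ) := Fin ns ⊕ (Fin na ⊕ Fin ns)

/-- Value types of FMDP variables. -/
def fv {ns na : ℕ} (Sv : Fin ns → Type) (Av : Fin na → Type) : FVar ns na → Type :=
  Sum.elim Sv (Sum.elim Av Sv)

instance {ns na : ℕ} (Sv : Fin ns → Type) (Av : Fin na → Type)
    [∀ i, Fintype (Sv i)] [∀ j, Fintype (Av j)] : ∀ v, Fintype (fv Sv Av v)
  | .inl i => inferInstanceAs (Fintype (Sv i))
  | .inr (.inl j) => inferInstanceAs (Fintype (Av j))
  | .inr (.inr k) => inferInstanceAs (Fintype (Sv k))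

instance {ns na : ℕ} (Sv : Fin ns → Type) (Av : Fin na → Type)
    [∀ i, DecidableEq (Sv i)] [∀ j, DecidableEq (Av j)] : ∀ v, DecidableEq (fv Sv Av v)
  | .inl i => inferInstanceAs (DecidableEq (Sv i))
  | .inr (.inl j) => inferInstanceAs (DecidableEq (Av j))
  | .inr (.inr k) => inferInstanceAs (DecidableEq (Sv k))

/-- The set of current-step coordinates. -/
def curSet (ns na : ℕ) : Finset (FVar ns na) :=
  (Finset.univ.image (Sum.inl : Fin ns → FVar ns na)) ∪
    (Finset.univ.image (fun j : Fin na => (Sum.inr (Sum.inl j) : FVar ns na)))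

/-- A joint pmf `p` on (S, A, S') is consistent with the transition kernel `T`. -/
def FConsistent {ns na : ℕ} {Sv : Fin ns → Type} {Av : Fin na → Type}
    [∀ i, Fintype (Sv i)] [∀ j, Fintype (Av j)]
    [∀ i, DecidableEq (Sv i)] [∀ j, DecidableEq (Av j)]
    (p : (∀ v, fv Sv Av v) → ℝ)
    (T : (∀ i, Sv i) → (∀ j, Av j) → (∀ k, Sv k) → ℝ) : Prop :=
  ∀ x, p x = marg p (curSet ns na) x *
    T (fun i => x (.inl i)) (fun j => x (.inr (.inl j))) (fun k => x (.inr (.inr k)))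

/-- Current-step coordinates of an FMDP: state variables and action variables. -/
abbrev CurVar (ns na : ℕ) := Fin ns ⊕ Fin na

/-- Embedding of current-step coordinates into the full variable set. -/
def liftCur {ns na : ℕ} : CurVar ns na → FVar ns na :=
  Sum.elim Sum.inl (fun j => Sum.inr (Sum.inl j))

/-!
Write `m x` for the `(S, A)`-marginal of `x` and `g x = P(S'ⱼ = x'ⱼ | S = s, A = a)`.
Consistency with `T` makes `g` the `S'ⱼ`-marginal of `T(· | s, a)`, the same for every
consistent distribution. With `xʷ` the configuration `x` with `Xᵢ` reset to `w`, the conditional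
independence reads `g x · ∑ m xʷ = ∑ m xʷ · g xʷ`: `g x` equals an `m`-weighted average over
`Xᵢ` in which the own value of `Xᵢ` in `x` no longer occurs. For positive `m` this holds iff `g`
does not depend on `Xᵢ`, a condition on `T` alone.
-/

section Marginal

variable {V : Type*} [Fintype V] [DecidableEq V] {val : V → Type*}
  [∀ v, Fintype (val v)] [∀ v, DecidableEq (val v)]

theorem marg_pos {p : (∀ v, val v) → ℝ} (hp : ∀ x, 0 < p x) (E : Finset V)
    (x : ∀ v, val v) : 0 < marg p E x :=
  sum_pos' (fun y _ => by split_ifs <;> simp [(hp y).le])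
    ⟨x, mem_univ x, by simp [hp x]⟩

theorem marg_congr (p : (∀ v, val v) → ℝ) {E : Finset V} {x y : ∀ v, val v}
    (h : ∀ v ∈ E, y v = x v) : marg p E y = marg p E x :=
  sum_congr rfl fun _ _ => if_congr
    ⟨fun hz v hv => (hz v hv).trans (h v hv), fun hz v hv => (hz v hv).trans (h v hv).symm⟩
    rfl rfl

theorem marg_eq_sum_marg_insert_update (p : (∀ v, val v) → ℝ) {E : Finset V} {u : V}
    (hu : u ∉ E) (x : ∀ v, val v) :
    marg p E x = ∑ w : val u, marg p (insert u E) (Function.update x u w) := by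
  simp only [marg]
  rw [sum_comm]
  refine sum_congr rfl fun y _ => ?_
  have hagree : ∀ w, (∀ v ∈ insert u E, y v = Function.update x u w v) ↔
      (y u = w ∧ ∀ v ∈ E, y v = x v) := fun w => by
    rw [forall_mem_insert, Function.update_self]
    refine and_congr_right fun _ => forall₂_congr fun v hv => ?_
    rw [Function.update_of_ne (ne_of_mem_of_not_mem hv hu)]
  simp only [hagree, ite_and, sum_ite_eq, mem_univ, if_true]

theorem marg_eq_marg_mul_of_factor {p f : (∀ v, val v) → ℝ} {C E : Finset V}
    (hpf : ∀ x, p x = marg p C x * f x) (hCE : C ⊆ E) (x : ∀ v, val v) :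
    marg p E x = marg p C x * ∑ y, if ∀ v ∈ E, y v = x v then f y else 0 := by
  rw [marg, mul_sum]
  refine sum_congr rfl fun y _ => ?_
  split_ifs with hy
  · rw [hpf y, marg_congr p fun v hv => hy v (hCE hv)]
  · rw [mul_zero]

theorem condP_eq_of_factor {p q f : (∀ v, val v) → ℝ} (hp : ∀ x, 0 < p x)
    (hq : ∀ x, 0 < q x) {C : Finset V} (hpf : ∀ x, p x = marg p C x * f x)
    (hqf : ∀ x, q x = marg q C x * f x) (k : V) : condP p k C = condP q k C := by
  funext x
  simp only [condP, marg_eq_marg_mul_of_factor hpf (subset_insert k C),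
    marg_eq_marg_mul_of_factor hqf (subset_insert k C),
    mul_div_cancel_left₀ _ (marg_pos hp C x).ne', mul_div_cancel_left₀ _ (marg_pos hq C x).ne']

theorem condIndep_iff_condP_update_eq {p : (∀ v, val v) → ℝ} (hp : ∀ x, 0 < p x)
    {C : Finset V} {u k : V} (hu : u ∈ C) (hk : k ∉ C) :
    CondIndep p {u} {k} (C \ {u}) ↔
      ∀ (x : ∀ v, val v) (w : val u), condP p k C (Function.update x u w) = condP p k C x := by
  set R := C \ {u}
  set m := marg p C
  set g := condP p k C
  have huR : u ∉ R := by simp [R]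
  have hukR : u ∉ insert k R := by
    simp [R, ne_of_mem_of_not_mem hu hk]
  have hC : insert u R = C := insert_sdiff_self_of_mem hu
  have hkC : insert u (insert k R) = insert k C := by
    rw [insert_comm, hC]
  have hm : ∀ x, 0 < m x := marg_pos hp C
  have hmg : ∀ x, marg p (insert k C) x = m x * g x := fun x =>
    (mul_div_cancel₀ _ (hm x).ne').symm
  have hR : ∀ x, marg p R x = ∑ w, m (Function.update x u w) := fun x => by
    rw [marg_eq_sum_marg_insert_update p huR, hC]
  have hkR : ∀ x, marg p (insert k R) x =
      ∑ w, m (Function.update x u w) * g (Function.update x u w) := fun x => by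
    rw [marg_eq_sum_marg_insert_update p hukR, hkC]
    exact sum_congr rfl fun w _ => hmg _
  have hunion : {u} ∪ {k} ∪ R = insert k C ∧ {u} ∪ R = C ∧ {k} ∪ R = insert k R := by
    refine ⟨?_, by rw [← insert_eq, hC], (insert_eq k R).symm⟩
    rw [← hkC]
    ext v
    simp only [mem_union, mem_singleton, mem_insert, or_assoc]
  have haverage : CondIndep p {u} {k} R ↔ ∀ x,
      g x * ∑ w, m (Function.update x u w) =
        ∑ w, m (Function.update x u w) * g (Function.update x u w) := by
    refine forall_congr' fun x => ?_
    rw [hunion.1, hunion.2.1, hunion.2.2, hmg, hR, hkR, mul_assoc]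
    exact mul_right_inj' (hm x).ne'
  rw [haverage]
  constructor
  · intro h x w
    have hpos : 0 < ∑ w, m (Function.update x u w) :=
      sum_pos (fun w _ => hm _) ⟨w, mem_univ w⟩
    have hw := h (Function.update x u w)
    simp only [Function.update_idem] at hw
    exact mul_right_cancel₀ hpos.ne' (hw.trans (h x).symm)
  · intro h x
    rw [mul_sum]
    exact sum_congr rfl fun w _ => by rw [h, mul_comm]

end Marginal

section FMDP

variable {ns na : ℕ}

theorem liftCur_mem_curSet (u : CurVar ns na) : liftCur u ∈ curSet ns na := by
  cases u <;> simp [curSet, liftCur]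

theorem inr_inr_notMem_curSet (k : Fin ns) : (.inr (.inr k) : FVar ns na) ∉ curSet ns na := by
  simp [curSet]

theorem FConsistent.condP_curSet_eq {Sv : Fin ns → Type} {Av : Fin na → Type}
    [∀ i, Fintype (Sv i)] [∀ j, Fintype (Av j)] [∀ i, DecidableEq (Sv i)]
    [∀ j, DecidableEq (Av j)] {T : (∀ i, Sv i) → (∀ j, Av j) → (∀ k, Sv k) → ℝ}
    {p q : (∀ v, fv Sv Av v) → ℝ} (hpcons : FConsistent p T) (hqcons : FConsistent q T)
    (hp : ∀ x, 0 < p x) (hq : ∀ x, 0 < q x) (k : FVar ns na) :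
    condP p k (curSet ns na) = condP q k (curSet ns na) :=
  condP_eq_of_factor hp hq hpcons hqcons k

end FMDP

theorem fmdp_identified_graph_is_distribution_free_general
    {ns na : ℕ} (Sv : Fin ns → Type) (Av : Fin na → Type)
    [∀ i, Fintype (Sv i)] [∀ i, DecidableEq (Sv i)]
    [∀ j, Fintype (Av j)] [∀ j, DecidableEq (Av j)]
    (T : (∀ i, Sv i) → (∀ j, Av j) → (∀ k, Sv k) → ℝ)
    (p q : (∀ v, fv Sv Av v) → ℝ)
    (hppos : ∀ x, 0 < p x) (hpcons : FConsistent p T)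
    (hqpos : ∀ x, 0 < q x) (hqcons : FConsistent q T) :
    (∀ (u : CurVar ns na) (k : Fin ns),
      CondIndep p {liftCur u} {(.inr (.inr k) : FVar ns na)}
        (curSet ns na \ {liftCur u}) ↔
      CondIndep q {liftCur u} {(.inr (.inr k) : FVar ns na)}
        (curSet ns na \ {liftCur u})) ∧
    -- hence the identified bipartite parent graph is the same for p and q
    ((fun (u : CurVar ns na) (k : Fin ns) =>
        ¬ CondIndep p {liftCur u} {(.inr (.inr k) : FVar ns na)}
          (curSet ns na \ {liftCur u})) =
     (fun (u : CurVar ns na) (k : Fin ns) =>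
        ¬ CondIndep q {liftCur u} {(.inr (.inr k) : FVar ns na)}
          (curSet ns na \ {liftCur u}))) := by
  have hiff : ∀ (u : CurVar ns na) (k : Fin ns),
      CondIndep p {liftCur u} {(.inr (.inr k) : FVar ns na)} (curSet ns na \ {liftCur u}) ↔
      CondIndep q {liftCur u} {(.inr (.inr k) : FVar ns na)} (curSet ns na \ {liftCur u}) :=
    fun u k => by
      rw [condIndep_iff_condP_update_eq hppos (liftCur_mem_curSet u) (inr_inr_notMem_curSet k),
        condIndep_iff_condP_update_eq hqpos (liftCur_mem_curSet u) (inr_inr_notMem_curSet k),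
        hpcons.condP_curSet_eq hqcons hppos hqpos]
  exact ⟨hiff, funext fun u => funext fun k => propext (not_congr (hiff u k))⟩

/-- For a transition kernel with independent transitions, the conditional
independence Xᵢ ⊥ S'ⱼ | ((S,A) \ {Xᵢ}) holds under one full-support consistent pmf iff it
holds under any other; hence the bipartite parent graph identified by the failure of this
conditional independence is the same for every consistent full-support distribution. -/
theorem fmdp_identified_graph_is_distribution_free
    {ns na : ℕ} (Sv : Fin ns → Type) (Av : Fin na → Type)
    [∀ i, Fintype (Sv i)] [∀ i, DecidableEq (Sv i)] [∀ i, Nonempty (Sv i)]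
    [∀ j, Fintype (Av j)] [∀ j, DecidableEq (Av j)] [∀ j, Nonempty (Av j)]
    (T : (∀ i, Sv i) → (∀ j, Av j) → (∀ k, Sv k) → ℝ)
    (hT0 : ∀ s a s', 0 ≤ T s a s') (hT1 : ∀ s a, ∑ s', T s a s' = 1)
    (Tj : ∀ k : Fin ns, (∀ i, Sv i) × (∀ j, Av j) → Sv k → ℝ)
    (hTj0 : ∀ k c y, 0 ≤ Tj k c y) (hTj1 : ∀ k c, ∑ y, Tj k c y = 1)
    (hind : ∀ s a s', T s a s' = ∏ k, Tj k (s, a) (s' k))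
    (p q : (∀ v, fv Sv Av v) → ℝ)
    (hppos : ∀ x, 0 < p x) (hpsum : ∑ x, p x = 1) (hpcons : FConsistent p T)
    (hqpos : ∀ x, 0 < q x) (hqsum : ∑ x, q x = 1) (hqcons : FConsistent q T) :
    (∀ (u : CurVar ns na) (k : Fin ns),
      CondIndep p {liftCur u} {(.inr (.inr k) : FVar ns na)}
        (curSet ns na \ {liftCur u}) ↔
      CondIndep q {liftCur u} {(.inr (.inr k) : FVar ns na)}
        (curSet ns na \ {liftCur u})) ∧
    -- hence the identified bipartite parent graph is the same for p and q
    ((fun (u : CurVar ns na) (k : Fin ns) =>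
        ¬ CondIndep p {liftCur u} {(.inr (.inr k) : FVar ns na)}
          (curSet ns na \ {liftCur u})) =
     (fun (u : CurVar ns na) (k : Fin ns) =>
        ¬ CondIndep q {liftCur u} {(.inr (.inr k) : FVar ns na)}
          (curSet ns na \ {liftCur u}))) :=
  fmdp_identified_graph_is_distribution_free_general Sv Av T p q hppos hpcons hqpos hqcons
end
end

section
/- Let G be a directed acyclic graph on the variables (S, A, S') in which every next-step vertex S'_j has all of its parents among the current-step vertices (S, A) and has no children, and no current-step vertex has a parent among the next-step vertices. If a full-support joint probability mass function p on (S, A, S') is compatible with G and faithful to G, then for every current-step vertex X_i ∈ (S, A) and every next-step vertex S'_j: X_i is a parent of S'_j in G if and only if the conditional independence X_i ⊥_p S'_j | ((S, A) \ {X_i}) fails. -/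
open Finset

noncomputable section

/-- An undirected path in a directed graph: consecutive vertices joined by an edge
in either direction, with no repeated vertex. -/
def IsUndirPath {V : Type*} (E : V → V → Prop) (l : List V) : Prop :=
  l.Chain' (fun a b => E a b ∨ E b a) ∧ l.Nodup

/-- A path is blocked by `Z`: it contains a chain or fork whose middle vertex is in `Z`,
or a collider such that neither the middle vertex nor any of its descendants is in `Z`. -/
def BlockedPath {V : Type*} (E : V → V → Prop) (Z : Set V) (l : List V) : Prop :=
  ∃ (l₁ l₂ : List V) (a b c : V), l = l₁ ++ a :: b :: c :: l₂ ∧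
    ((((E a b ∧ E b c) ∨ (E c b ∧ E b a) ∨ (E b a ∧ E b c)) ∧ b ∈ Z) ∨
     ((E a b ∧ E c b) ∧ b ∉ Z ∧ ∀ d, Relation.TransGen E b d → d ∉ Z))

/-- `X` and `Y` are d-separated by `Z`: every undirected path from a vertex of `X`
to a vertex of `Y` is blocked by `Z`. -/
def DSeparated {V : Type*} (E : V → V → Prop) (X Y Z : Set V) : Prop :=
  ∀ l : List V, IsUndirPath E l →
    (∃ u ∈ X, l.head? = some u) → (∃ w ∈ Y, l.getLast? = some w) →
    BlockedPath E Z l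

/-- The graph is acyclic. -/
def Acyclic {V : Type*} (E : V → V → Prop) : Prop :=
  ∀ v, ¬ Relation.TransGen E v v

/-- `p` is faithful to the DAG: every conditional independence between disjoint sets
of variables is a d-separation. -/
def FaithfulTo {V : Type*} [Fintype V] [DecidableEq V] {val : V → Type*}
    [∀ v, Fintype (val v)] [∀ v, DecidableEq (val v)]
    (p : (∀ v, val v) → ℝ) (E : V → V → Prop) : Prop :=
  ∀ X Y Z : Finset V, Disjoint X Y → Disjoint X Z → Disjoint Y Z →
    CondIndep p X Y Z → DSeparated E ↑X ↑Y ↑Z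

/-- `p` is compatible with the DAG: it factorizes as the product over all variables of
the conditional probabilities given the graph parents. -/
def CompatibleWith {V : Type*} [Fintype V] [DecidableEq V] {val : V → Type*}
    [∀ v, Fintype (val v)] [∀ v, DecidableEq (val v)]
    (p : (∀ v, val v) → ℝ) (E : V → V → Prop) [DecidableRel E] : Prop :=
  ∀ x, p x = ∏ v, condP p v (Finset.univ.filter (fun u => E u v)) x

/-! An edge `a → b` into a sink `b` is an undirected path with two vertices, which no set can
block, so faithfulness rules out `{a} ⊥ {b} | Z`. Conversely, if `a` is not a parent of `b`, the
factorization of `p` splits as `φ · ψ`, where `ψ = p(b | pa b)` depends only on `b` and its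
parents, all of which lie in `Z`, and `φ`, the product of the other factors, does not depend on
`b` at all because `b` has no children. Such a splitting forces `{a} ⊥ {b} | Z`: summing out `b`
multiplies each marginal by the same factor `∑ ψ`. -/

section Marginal

variable {V : Type*} [Fintype V] [DecidableEq V] {val : V → Type*}
  [∀ v, Fintype (val v)] [∀ v, DecidableEq (val v)]

theorem dependsOn_marg (p : (∀ v, val v) → ℝ) (S : Finset V) : DependsOn (marg p S) ↑S :=
  fun x y hxy => Finset.sum_congr rfl fun z _ =>
    if_congr (forall₂_congr fun v hv => by rw [hxy v hv]) rfl rfl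

theorem dependsOn_condP (p : (∀ v, val v) → ℝ) (v : V) (P : Finset V) :
    DependsOn (condP p v P) ↑(insert v P) := fun x y hxy => by
  have hP : ∀ w ∈ (P : Set V), x w = y w := fun w hw => hxy w (by simp [Finset.mem_coe.1 hw])
  rw [condP, condP, dependsOn_marg p _ hxy, dependsOn_marg p P hP]

theorem marg_mul_of_dependsOn (φ ψ : (∀ v, val v) → ℝ) {S : Finset V} (hψ : DependsOn ψ ↑S)
    (x : ∀ v, val v) : marg (fun z => φ z * ψ z) S x = marg φ S x * ψ x := by
  rw [marg, marg, Finset.sum_mul]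
  refine Finset.sum_congr rfl fun y _ => ?_
  split_ifs with h
  · rw [hψ h]
  · rw [zero_mul]

theorem sum_marg_insert_update (p : (∀ v, val v) → ℝ) {b : V} {S : Finset V} (hb : b ∉ S)
    (x : ∀ v, val v) :
    ∑ c : val b, marg p (insert b S) (Function.update x b c) = marg p S x := by
  unfold marg
  rw [Finset.sum_comm]
  refine Finset.sum_congr rfl fun y _ => ?_
  have key : ∀ c : val b, (∀ w ∈ insert b S, y w = Function.update x b c w) ↔
      (y b = c ∧ ∀ w ∈ S, y w = x w) := fun c => by
    rw [Finset.forall_mem_insert, Function.update_self]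
    refine and_congr Iff.rfl (forall₂_congr fun w hw => ?_)
    rw [Function.update_of_ne (ne_of_mem_of_not_mem hw hb)]
  simp_rw [key, ite_and, Finset.sum_ite_eq, Finset.mem_univ, if_true]

theorem marg_insert_update_of_dependsOn {φ : (∀ v, val v) → ℝ} {b : V}
    (hφ : DependsOn φ ({b}ᶜ : Set V)) (S : Finset V) (x : ∀ v, val v) (c : val b) :
    marg φ (insert b S) (Function.update x b c) = marg φ (insert b S) x := by
  -- swapping the values `c` and `x b` at `b` carries one summation range onto the other
  set σ : (∀ v, val v) → ∀ v, val v := fun y => Function.update y b (Equiv.swap c (x b) (y b))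
  have hσ : Function.Involutive σ := fun y => by simp [σ]
  refine Fintype.sum_equiv hσ.toPerm _ _ fun y => if_congr ?_ (hφ fun v hv => ?_).symm rfl
  · refine forall₂_congr fun v _ => ?_
    by_cases hv : v = b
    · subst hv
      simp [σ, Equiv.swap_apply_eq_iff]
    · simp [σ, Function.update_of_ne hv]
  · simp [σ, Function.update_of_ne (Set.mem_compl_singleton_iff.1 hv)]

theorem condIndep_of_dependsOn {p φ ψ : (∀ v, val v) → ℝ} {a b : V} {Z : Finset V}
    (hab : a ≠ b) (hbZ : b ∉ Z) (hp : ∀ z, p z = φ z * ψ z)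
    (hφ : DependsOn φ ({b}ᶜ : Set V)) (hψ : DependsOn ψ ↑(insert b Z)) :
    CondIndep p {a} {b} Z := by
  intro x
  obtain rfl : p = fun z => φ z * ψ z := funext hp
  have hmul : ∀ T : Finset V, insert b Z ⊆ T →
      ∀ y, marg (fun z => φ z * ψ z) T y = marg φ T y * ψ y :=
    fun T hT => marg_mul_of_dependsOn φ ψ (hψ.mono (Finset.coe_subset.2 hT))
  have hsum : ∀ S : Finset V, b ∉ S → Z ⊆ S → marg (fun z => φ z * ψ z) S x
      = marg φ (insert b S) x * ∑ c, ψ (Function.update x b c) := fun S hbS hZS => by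
    rw [← sum_marg_insert_update _ hbS, Finset.mul_sum]
    refine Finset.sum_congr rfl fun c _ => ?_
    rw [hmul _ (Finset.insert_subset_insert b hZS), marg_insert_update_of_dependsOn hφ]
  simp only [← Finset.insert_eq, Finset.insert_union]
  rw [Finset.insert_comm, hmul _ (Finset.insert_subset_insert b (Finset.subset_insert a Z)),
    hmul _ subset_rfl, hsum Z hbZ subset_rfl,
    hsum (insert a Z) (by simp [hab.symm, hbZ]) (Finset.subset_insert _ _)]
  ring

end Marginal

section Graph

variable {V : Type*} {E : V → V → Prop}

theorem not_dSeparated_of_adj {a b : V} (hab : a ≠ b) (h : E a b) (Z : Set V) :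
    ¬ DSeparated E {a} {b} Z := fun hd => by
  obtain ⟨l₁, l₂, _, _, _, hl, -⟩ :=
    hd [a, b] ⟨List.isChain_pair.2 (Or.inl h), by simp [hab]⟩ ⟨a, rfl, rfl⟩ ⟨b, rfl, rfl⟩
  have := congrArg List.length hl
  simp only [List.length_append, List.length_cons, List.length_nil] at this
  omega

variable [Fintype V] [DecidableEq V] [DecidableRel E] {val : V → Type*}
  [∀ v, Fintype (val v)] [∀ v, DecidableEq (val v)] {p : (∀ v, val v) → ℝ}

theorem CompatibleWith.condIndep_of_sink (hp : CompatibleWith p E) {a b : V} {Z : Finset V}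
    (hsink : ∀ v, ¬ E b v) (hab : a ≠ b) (hbZ : b ∉ Z) (hpa : ∀ w, E w b → w ∈ Z) :
    CondIndep p {a} {b} Z := by
  refine condIndep_of_dependsOn hab hbZ
    (φ := fun z => ∏ v ∈ Finset.univ.erase b, condP p v (Finset.univ.filter (E · v)) z)
    (fun z => by rw [hp z, ← Finset.mul_prod_erase _ _ (Finset.mem_univ b), mul_comm])
    (fun x y hxy => Finset.prod_congr rfl fun v hv => dependsOn_condP p v _ fun w hw => hxy w ?_)
    ((dependsOn_condP p b _).mono fun w hw => ?_)
  · rcases Finset.mem_insert.1 hw with rfl | hw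
    · exact (Finset.mem_erase.1 hv).1
    · exact fun hwb => hsink v (hwb ▸ (Finset.mem_filter.1 hw).2)
  · simp only [Finset.coe_insert, Finset.coe_filter, Set.mem_insert_iff, Set.mem_ofPred_eq,
      Finset.mem_univ, true_and] at hw ⊢
    exact hw.imp_right (hpa w)

theorem adj_iff_not_condIndep_of_sink (hcompat : CompatibleWith p E) (hfaith : FaithfulTo p E)
    {a b : V} {Z : Finset V} (hsink : ∀ v, ¬ E b v) (hab : a ≠ b) (haZ : a ∉ Z) (hbZ : b ∉ Z)
    (hpa : ∀ w, E w b → w ≠ a → w ∈ Z) :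
    E a b ↔ ¬ CondIndep p {a} {b} Z := by
  refine ⟨fun hE hCI => not_dSeparated_of_adj hab hE Z ?_, fun hCI => by_contra fun hE => hCI ?_⟩
  · simpa using hfaith {a} {b} Z (by simpa) (by simpa) (by simpa) hCI
  · exact hcompat.condIndep_of_sink hsink hab hbZ fun w hw => hpa w hw fun h => hE (h ▸ hw)

end Graph

theorem bipartite_faithful_dag_edges_iff_ci_fails_general
    {ns na : ℕ} (Sv : Fin ns → Type) (Av : Fin na → Type)
    [∀ i, Fintype (Sv i)] [∀ i, DecidableEq (Sv i)]
    [∀ j, Fintype (Av j)] [∀ j, DecidableEq (Av j)]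
    (E : FVar ns na → FVar ns na → Prop) [DecidableRel E]
    -- next-step vertices have no children
    (hnochild : ∀ (k : Fin ns) (v : FVar ns na), ¬ E (.inr (.inr k)) v)
    (p : (∀ v, fv Sv Av v) → ℝ)
    (hcompat : CompatibleWith p E) (hfaith : FaithfulTo p E) :
    ∀ (u : CurVar ns na) (k : Fin ns),
      E (liftCur u) (.inr (.inr k)) ↔
      ¬ CondIndep p {liftCur u} {(.inr (.inr k) : FVar ns na)}
        (curSet ns na \ {liftCur u}) := by
  intro u k
  have hne : liftCur u ≠ .inr (.inr k) := by cases u <;> simp [liftCur]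
  refine adj_iff_not_condIndep_of_sink hcompat hfaith (hnochild k) hne (by simp)
    (by simp [curSet]) fun w hw hwu => Finset.mem_sdiff.2 ⟨?_, by simpa using hwu⟩
  rcases w with i | j | k'
  · simp [curSet]
  · simp [curSet]
  · exact absurd hw (hnochild k' _)

/-- Let `G` be a DAG on (S, A, S') in which every next-step vertex has all
its parents among the current-step vertices and has no children (in particular no
current-step vertex has a next-step parent).  If a full-support pmf is compatible with and
faithful to `G`, then a current-step vertex is a parent of a next-step vertex iff the
corresponding conditional independence given all remaining current-step vertices fails. -/
theorem bipartite_faithful_dag_edges_iff_ci_fails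
    {ns na : ℕ} (Sv : Fin ns → Type) (Av : Fin na → Type)
    [∀ i, Fintype (Sv i)] [∀ i, DecidableEq (Sv i)] [∀ i, Nonempty (Sv i)]
    [∀ j, Fintype (Av j)] [∀ j, DecidableEq (Av j)] [∀ j, Nonempty (Av j)]
    (E : FVar ns na → FVar ns na → Prop) [DecidableRel E]
    (hacyc : Acyclic E)
    -- parents of next-step vertices lie among the current-step vertices
    (hpar : ∀ (k : Fin ns) (v : FVar ns na), E v (.inr (.inr k)) →
      (∃ i : Fin ns, v = .inl i) ∨ (∃ j : Fin na, v = .inr (.inl j)))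
    -- next-step vertices have no children
    (hnochild : ∀ (k : Fin ns) (v : FVar ns na), ¬ E (.inr (.inr k)) v)
    (p : (∀ v, fv Sv Av v) → ℝ)
    (hpos : ∀ x, 0 < p x) (hsum : ∑ x, p x = 1)
    (hcompat : CompatibleWith p E) (hfaith : FaithfulTo p E) :
    ∀ (u : CurVar ns na) (k : Fin ns),
      E (liftCur u) (.inr (.inr k)) ↔
      ¬ CondIndep p {liftCur u} {(.inr (.inr k) : FVar ns na)}
        (curSet ns na \ {liftCur u}) :=
  bipartite_faithful_dag_edges_iff_ci_fails_general Sv Av E hnochild p hcompat hfaith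
end
end

section
/- Consider an object-oriented FMDP with independent transitions whose transition kernel satisfies result symmetry and causation symmetry, and let p be any full-support joint probability mass function on (S, A, S') consistent with the transition kernel. (Local rule) For a class C with field U and state field V, the class-level local causality C.U → C.V (meaning: for every instance O of C, the coordinate kernel T_{O,V} depends on the coordinate O.U) holds if and only if for every instance O of C the conditional independence O.U ⊥_p O.V' | ((S, A) \ {O.U}) fails. (Global rule) For classes C_k and C, with field U of C_k and state field V of C, assume that for every instance O_j of C there exists at least one instance of C_k distinct from O_j; then the class-level global causality C_k.U ⇒ C.V (meaning: for every instance O_j of C and every instance O_r of C_k with r ≠ j, T_{j,V} depends on the coordinate O_r.U) holds if and only if for every instance O_j of C the block of coordinates {O_r.U : O_r an instance of C_k, r ≠ j} is not conditionally independent of O_j.V' given all the remaining current-step coordinates. -/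
open Finset

noncomputable section

/-- The specification of an object-oriented FMDP: `K` classes, class `k` having `Nk k`
instances, state fields `SF k` and action fields `AF k`, with finite nonempty value types. -/
structure OOSpec where
  K : ℕ
  Nk : Fin K → ℕ
  SF : Fin K → Type
  AF : Fin K → Type
  SVal : ∀ k, SF k → Type
  AVal : ∀ k, AF k → Type
  finSF : ∀ k, Fintype (SF k)
  finAF : ∀ k, Fintype (AF k)
  deqSF : ∀ k, DecidableEq (SF k)
  deqAF : ∀ k, DecidableEq (AF k)
  finSVal : ∀ k u, Fintype (SVal k u)
  finAVal : ∀ k v, Fintype (AVal k v)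
  deqSVal : ∀ k u, DecidableEq (SVal k u)
  deqAVal : ∀ k v, DecidableEq (AVal k v)
  neSVal : ∀ k u, Nonempty (SVal k u)
  neAVal : ∀ k v, Nonempty (AVal k v)

attribute [instance] OOSpec.finSF OOSpec.finAF OOSpec.deqSF OOSpec.deqAF
  OOSpec.finSVal OOSpec.finAVal OOSpec.deqSVal OOSpec.deqAVal
  OOSpec.neSVal OOSpec.neAVal

namespace OOSpec

variable (σ : OOSpec)

/-- Objects: the `m`-th instance of class `k`. -/
abbrev ObjIdx := Σ k : Fin σ.K, Fin (σ.Nk k)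

/-- The fields of class `k`: state fields and action fields. -/
abbrev Fd (k : Fin σ.K) := σ.SF k ⊕ σ.AF k

/-- Value type of each field of class `k`. -/
def fval (k : Fin σ.K) : σ.Fd k → Type := Sum.elim (σ.SVal k) (σ.AVal k)

instance (k : Fin σ.K) : ∀ f : σ.Fd k, Fintype (σ.fval k f)
  | .inl u => inferInstanceAs (Fintype (σ.SVal k u))
  | .inr v => inferInstanceAs (Fintype (σ.AVal k v))

instance (k : Fin σ.K) : ∀ f : σ.Fd k, DecidableEq (σ.fval k f)
  | .inl u => inferInstanceAs (DecidableEq (σ.SVal k u))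
  | .inr v => inferInstanceAs (DecidableEq (σ.AVal k v))

/-- The attribute tuple of an instance of class `k`. -/
abbrev Obj (k : Fin σ.K) := ∀ f : σ.Fd k, σ.fval k f

/-- Current configurations: an attribute tuple for every object. -/
abbrev Cur := ∀ o : σ.ObjIdx, σ.Obj o.1

/-- Next-step configurations: values of all next-step state attributes. -/
abbrev Nxt := ∀ o : σ.ObjIdx, ∀ u : σ.SF o.1, σ.SVal o.1 u

theorem fst_swap (a b o : σ.ObjIdx) (h : a.1 = b.1) :
    (Equiv.swap a b o).1 = o.1 := by
  rcases eq_or_ne o a with rfl | ha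
  · rw [Equiv.swap_apply_left]; exact h.symm
  · rcases eq_or_ne o b with rfl | hb
    · rw [Equiv.swap_apply_right]; exact h
    · rw [Equiv.swap_apply_of_ne_of_ne ha hb]

/-- The involution σ_{ab} on current configurations exchanging the attribute tuples of
two instances `a` and `b` of a common class. -/
def swapCur (a b : σ.ObjIdx) (h : a.1 = b.1) (w : σ.Cur) : σ.Cur :=
  fun o => cast (congrArg σ.Obj (σ.fst_swap a b o h)) (w (Equiv.swap a b o))

/-- The conditional law, under `T`, of object `o`'s next-step state attributes at `w`. -/
def objLaw (T : σ.Cur → σ.Nxt → ℝ) (o : σ.ObjIdx) (w : σ.Cur)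
    (y : ∀ u : σ.SF o.1, σ.SVal o.1 u) : ℝ :=
  ∑ x' : σ.Nxt, if x' o = y then T w x' else 0

/-- The marginal of `T(· | w)` on the single next-step coordinate `O_o.u'`
(the coordinate kernel `T_{o,u}`). -/
def coordKer (T : σ.Cur → σ.Nxt → ℝ) (o : σ.ObjIdx) (u : σ.SF o.1) (w : σ.Cur)
    (y : σ.SVal o.1 u) : ℝ :=
  ∑ x' : σ.Nxt, if x' o u = y then T w x' else 0

/-- `T` has independent transitions: it factorizes over the next-step coordinates as the
product of its coordinate kernels. -/
def IndepTrans (T : σ.Cur → σ.Nxt → ℝ) : Prop :=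
  ∀ (w : σ.Cur) (x' : σ.Nxt),
    T w x' = ∏ ou : Σ o : σ.ObjIdx, σ.SF o.1, σ.coordKer T ou.1 ou.2 w (x' ou.1 ou.2)

/-- A function of the current configuration depends on the current-step coordinate
`O_j.f`: it takes different values at two configurations differing only in that coordinate. -/
def DependsOn {α : Type*} (κ : σ.Cur → α) (j : σ.ObjIdx) (f : σ.Fd j.1) : Prop :=
  ∃ w w' : σ.Cur,
    (∀ (o : σ.ObjIdx) (g : σ.Fd o.1),
      (⟨o, g⟩ : Σ o : σ.ObjIdx, σ.Fd o.1) ≠ ⟨j, f⟩ → w o g = w' o g) ∧ κ w ≠ κ w'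

/-- Result symmetry: instances of a common class transit by the same rule. -/
def ResultSym (T : σ.Cur → σ.Nxt → ℝ) : Prop :=
  ∀ (k : Fin σ.K) (m m' : Fin (σ.Nk k)) (w : σ.Cur) (y : ∀ u : σ.SF k, σ.SVal k u),
    σ.objLaw T ⟨k, m⟩ w y = σ.objLaw T ⟨k, m'⟩ (σ.swapCur ⟨k, m⟩ ⟨k, m'⟩ rfl w) y

/-- Causation symmetry: two other instances of a common class are interchangeable for the
transition of any object. -/
def CausSym (T : σ.Cur → σ.Nxt → ℝ) : Prop :=
  ∀ (i : σ.ObjIdx) (k : Fin σ.K) (m m' : Fin (σ.Nk k)),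
    (⟨k, m⟩ : σ.ObjIdx) ≠ i → (⟨k, m'⟩ : σ.ObjIdx) ≠ i →
    ∀ (w : σ.Cur) (y : ∀ u : σ.SF i.1, σ.SVal i.1 u),
      σ.objLaw T i w y = σ.objLaw T i (σ.swapCur ⟨k, m⟩ ⟨k, m'⟩ rfl w) y

end OOSpec

namespace OOSpec

variable (σ : OOSpec)

/-- Current-step coordinates: the attribute `O_o.f`. -/
abbrev CurV := Σ o : σ.ObjIdx, σ.Fd o.1

/-- Next-step coordinates: the attribute `O_o.u'`. -/
abbrev NxtV := Σ o : σ.ObjIdx, σ.SF o.1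

/-- All variables of the OO-FMDP. -/
abbrev Var := σ.CurV ⊕ σ.NxtV

/-- Value type of each variable. -/
def vval : σ.Var → Type
  | .inl v => σ.fval v.1.1 v.2
  | .inr v => σ.SVal v.1.1 v.2

instance : ∀ v : σ.Var, Fintype (σ.vval v)
  | .inl v => inferInstanceAs (Fintype (σ.fval v.1.1 v.2))
  | .inr v => inferInstanceAs (Fintype (σ.SVal v.1.1 v.2))

instance : ∀ v : σ.Var, DecidableEq (σ.vval v)
  | .inl v => inferInstanceAs (DecidableEq (σ.fval v.1.1 v.2))
  | .inr v => inferInstanceAs (DecidableEq (σ.SVal v.1.1 v.2))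

/-- Full configurations of all variables. -/
abbrev Cfg := ∀ v : σ.Var, σ.vval v

/-- The current configuration determined by a full configuration. -/
def curOf (d : σ.Cfg) : σ.Cur := fun o f => d (.inl ⟨o, f⟩)

/-- The next-step configuration determined by a full configuration. -/
def nxtOf (d : σ.Cfg) : σ.Nxt := fun o u => d (.inr ⟨o, u⟩)

/-- Building a full configuration from a current and a next configuration. -/
def mkCfg (w : σ.Cur) (x' : σ.Nxt) : σ.Cfg
  | .inl v => w v.1 v.2
  | .inr v => x' v.1 v.2

/-- The set of all current-step coordinates. -/
def curVars : Finset σ.Var := Finset.univ.image Sum.inl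

/-- A joint pmf on (S, A, S') is consistent with the transition kernel `T`. -/
def Consistent (p : σ.Cfg → ℝ) (T : σ.Cur → σ.Nxt → ℝ) : Prop :=
  ∀ d : σ.Cfg, p d = marg p σ.curVars d * T (σ.curOf d) (σ.nxtOf d)

end OOSpec

/-!
For a full-support `p` consistent with `T` one has `p(w, x') = p(w) T(w, x')`, so the
conditional independence of a block `X` of current coordinates from `O_j.V'` given the rest
says that `T_{j,V}(· | w)` equals its `p`-weighted average over all configurations agreeing
with `w` off `X`. With positive weights this happens iff `T_{j,V}` is constant on these
classes, i.e. (changing one coordinate at a time) iff it depends on no coordinate of `X`.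
The local rule is the case of a single coordinate. In the global rule the block is
dependent iff one of its instances is, and causation symmetry, swapping two instances of
`C_k`, transfers a dependence on one instance to every other one.
-/

theorem dependsOn_compl_coe_finset_iff {ι : Type*} [DecidableEq ι] {α : ι → Type*} {β : Type*}
    {f : (Π i, α i) → β} (s : Finset ι) :
    DependsOn f (↑s)ᶜ ↔ ∀ i ∈ s, DependsOn f {i}ᶜ := by
  refine ⟨fun hf i hi => hf.mono (Set.compl_subset_compl.mpr (by simpa using hi)), fun h => ?_⟩
  induction s using Finset.induction_on with
  | empty => simpa using dependsOn_univ f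
  | insert a s _ ih =>
    intro x y hxy
    have hupdate : f x = f (Function.update x a (y a)) :=
      h a (mem_insert_self a s) fun i hi => (Function.update_of_ne hi _ _).symm
    rw [hupdate]
    refine ih (fun i hi => h i (mem_insert_of_mem hi)) fun i hi => ?_
    rcases eq_or_ne i a with rfl | hia
    · exact Function.update_self ..
    · rw [Function.update_of_ne hia]
      exact hxy i (by simp_all)

theorem forall_mul_sum_filter_eq_iff {W : Type*} [Fintype W] {R : W → W → Prop} [DecidableRel R]
    (hR : Equivalence R) {M : W → ℝ} (hM : ∀ w, 0 < M w) (f : W → ℝ) :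
    (∀ w, f w * ∑ u with R u w, M u = ∑ u with R u w, M u * f u) ↔
      ∀ w w', R w w' → f w = f w' := by
  constructor
  · intro h w w' hww'
    have hclass : univ.filter (R · w) = univ.filter (R · w') := by
      ext u
      simpa using ⟨fun hu => hR.trans hu hww', fun hu => hR.trans hu (hR.symm hww')⟩
    have hpos : 0 < ∑ u with R u w, M u :=
      Finset.sum_pos (fun u _ => hM u) ⟨w, by simpa using hR.refl w⟩
    refine mul_right_cancel₀ hpos.ne' ?_
    rw [h w, hclass, ← h w']
  · intro h w
    rw [Finset.mul_sum]
    exact Finset.sum_congr rfl fun u hu => by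
      rw [h u w (Finset.mem_filter.mp hu).2, mul_comm]

namespace OOSpec

variable {σ : OOSpec}

lemma dependsOn_iff_not_dependsOn_compl {α : Type*} (κ : σ.Cur → α) (o : σ.ObjIdx)
    (f : σ.Fd o.1) :
    σ.DependsOn κ o f ↔ ¬ _root_.DependsOn (κ ∘ Sigma.curry) {⟨o, f⟩}ᶜ := by
  simp only [OOSpec.DependsOn, _root_.DependsOn, not_forall]
  constructor
  · rintro ⟨w, w', hagree, hne⟩
    exact ⟨Sigma.uncurry w, Sigma.uncurry w', fun v hv => hagree v.1 v.2 hv, hne⟩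
  · rintro ⟨x, x', hagree, hne⟩
    exact ⟨Sigma.curry x, Sigma.curry x', fun o g hog => hagree ⟨o, g⟩ hog, hne⟩

lemma forall_agreeOn_compl_imp_eq_iff {α : Type*} (κ : σ.Cur → α) (X : Finset σ.CurV) :
    (∀ w w' : σ.Cur, (∀ v ∈ Xᶜ, w v.1 v.2 = w' v.1 v.2) → κ w = κ w') ↔
      ∀ v ∈ X, ¬ σ.DependsOn κ v.1 v.2 := by
  simp_rw [dependsOn_iff_not_dependsOn_compl, not_not]
  rw [← dependsOn_compl_coe_finset_iff, ← Finset.coe_compl]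
  exact ⟨fun h x x' hx => h _ _ hx, fun h w w' hw => h hw⟩

def curMarg (p : σ.Cfg → ℝ) (w : σ.Cur) : ℝ := ∑ x' : σ.Nxt, p (σ.mkCfg w x')

lemma curMarg_pos {p : σ.Cfg → ℝ} (hp : ∀ d, 0 < p d) (w : σ.Cur) : 0 < σ.curMarg p w :=
  Finset.sum_pos (fun _ _ => hp _) Finset.univ_nonempty

def cfgEquiv : σ.Cur × σ.Nxt ≃ σ.Cfg where
  toFun wx := σ.mkCfg wx.1 wx.2
  invFun d := (σ.curOf d, σ.nxtOf d)
  left_inv _ := rfl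
  right_inv _ := funext fun | .inl _ => rfl | .inr _ => rfl

lemma sum_cfg (f : σ.Cfg → ℝ) : ∑ d, f d = ∑ w : σ.Cur, ∑ x' : σ.Nxt, f (σ.mkCfg w x') := by
  rw [← cfgEquiv.sum_comp, Fintype.sum_prod_type]
  rfl

lemma sum_filter_agreeOn_univ (g : σ.Cur → ℝ) (w₀ : σ.Cur) :
    ∑ w with ∀ v ∈ (univ : Finset σ.CurV), w v.1 v.2 = w₀ v.1 v.2, g w = g w₀ := by
  have hagree : ∀ w : σ.Cur, (∀ v ∈ (univ : Finset σ.CurV), w v.1 v.2 = w₀ v.1 v.2) ↔ w = w₀ :=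
    fun w => ⟨fun h => funext fun o => funext fun f => h ⟨o, f⟩ (mem_univ _), fun h _ _ => h ▸ rfl⟩
  rw [Finset.filter_congr fun w _ => hagree w, Finset.filter_eq', if_pos (mem_univ _),
    sum_singleton]

lemma marg_image_inl (p : σ.Cfg → ℝ) (Z : Finset σ.CurV) (d : σ.Cfg) :
    marg p (Z.image Sum.inl) d =
      ∑ w with ∀ v ∈ Z, w v.1 v.2 = σ.curOf d v.1 v.2, σ.curMarg p w := by
  rw [marg, sum_cfg, Finset.sum_filter]
  refine Finset.sum_congr rfl fun w _ => ?_
  have hcond : ∀ x' : σ.Nxt, (∀ v ∈ Z.image Sum.inl, σ.mkCfg w x' v = d v) ↔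
      ∀ v ∈ Z, w v.1 v.2 = σ.curOf d v.1 v.2 := fun _ => Finset.forall_mem_image
  simp only [hcond, Finset.sum_ite_irrel, Finset.sum_const_zero, curMarg]

lemma marg_curVars (p : σ.Cfg → ℝ) (d : σ.Cfg) :
    marg p σ.curVars d = σ.curMarg p (σ.curOf d) := by
  rw [curVars, marg_image_inl, sum_filter_agreeOn_univ]

lemma Consistent.apply_mkCfg {p : σ.Cfg → ℝ} {T : σ.Cur → σ.Nxt → ℝ} (hpT : σ.Consistent p T)
    (w : σ.Cur) (x' : σ.Nxt) : p (σ.mkCfg w x') = σ.curMarg p w * T w x' := by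
  rw [hpT, marg_curVars]
  rfl

lemma Consistent.marg_insert_inr_image_inl {p : σ.Cfg → ℝ} {T : σ.Cur → σ.Nxt → ℝ}
    (hpT : σ.Consistent p T) (Z : Finset σ.CurV) (j : σ.NxtV) (d : σ.Cfg) :
    marg p (insert (Sum.inr j) (Z.image Sum.inl)) d =
      ∑ w with ∀ v ∈ Z, w v.1 v.2 = σ.curOf d v.1 v.2,
        σ.curMarg p w * σ.coordKer T j.1 j.2 w (σ.nxtOf d j.1 j.2) := by
  rw [marg, sum_cfg, Finset.sum_filter]
  refine Finset.sum_congr rfl fun w _ => ?_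
  have hcond : ∀ x' : σ.Nxt, (∀ v ∈ insert (Sum.inr j) (Z.image Sum.inl), σ.mkCfg w x' v = d v) ↔
      (∀ v ∈ Z, w v.1 v.2 = σ.curOf d v.1 v.2) ∧ x' j.1 j.2 = σ.nxtOf d j.1 j.2 :=
    fun _ => by rw [Finset.forall_mem_insert, Finset.forall_mem_image, and_comm]; rfl
  simp only [hcond, ite_and, Finset.sum_ite_irrel, Finset.sum_const_zero, coordKer,
    Finset.mul_sum, hpT.apply_mkCfg, mul_ite, mul_zero]

lemma surjective_eval_nxt (j : σ.NxtV) : Function.Surjective fun x' : σ.Nxt => x' j.1 j.2 :=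
  (Function.surjective_eval j.2).comp
    (Function.surjective_eval (β := fun o : σ.ObjIdx => ∀ u : σ.SF o.1, σ.SVal o.1 u) j.1)

theorem condIndep_iff_coordKer_eq_of_agreeOn_compl {p : σ.Cfg → ℝ} {T : σ.Cur → σ.Nxt → ℝ}
    (hp : ∀ d, 0 < p d) (hpT : σ.Consistent p T) (X : Finset σ.CurV) (j : σ.NxtV) :
    CondIndep p (X.image Sum.inl) {Sum.inr j} (σ.curVars \ X.image Sum.inl) ↔
      ∀ w w' : σ.Cur, (∀ v ∈ Xᶜ, w v.1 v.2 = w' v.1 v.2) →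
        σ.coordKer T j.1 j.2 w = σ.coordKer T j.1 j.2 w' := by
  have hZ : σ.curVars \ X.image Sum.inl = Xᶜ.image Sum.inl := by
    rw [curVars, ← Finset.image_sdiff _ _ Sum.inl_injective, Finset.compl_eq_univ_sdiff]
  have hXZ : X.image Sum.inl ∪ Xᶜ.image Sum.inl = univ.image (Sum.inl : _ → σ.Var) := by
    rw [← Finset.image_union, Finset.union_compl]
  have hXYZ : X.image Sum.inl ∪ {Sum.inr j} ∪ Xᶜ.image Sum.inl =
      insert (Sum.inr j) (univ.image (Sum.inl : _ → σ.Var)) := by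
    rw [Finset.union_right_comm, hXZ, Finset.union_comm, ← Finset.insert_eq]
  unfold CondIndep
  rw [hZ, hXYZ, hXZ, ← Finset.insert_eq]
  simp only [hpT.marg_insert_inr_image_inl, marg_image_inl, sum_filter_agreeOn_univ, mul_assoc,
    mul_right_inj' (curMarg_pos hp _).ne']
  have hR : Equivalence fun u w : σ.Cur => ∀ v ∈ Xᶜ, u v.1 v.2 = w v.1 v.2 :=
    ⟨fun _ _ _ => rfl, fun h v hv => (h v hv).symm, fun h h' v hv => (h v hv).trans (h' v hv)⟩
  constructor
  · intro h w w' hww'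
    funext y
    obtain ⟨x', rfl⟩ := surjective_eval_nxt j y
    exact (forall_mul_sum_filter_eq_iff hR (curMarg_pos hp) _).mp
      (fun u => h (σ.mkCfg u x')) w w' hww'
  · intro h d
    exact (forall_mul_sum_filter_eq_iff hR (curMarg_pos hp) _).mpr
      (fun w w' hww' => congrFun (h w w' hww') _) (σ.curOf d)

theorem not_condIndep_iff_exists_dependsOn {p : σ.Cfg → ℝ} {T : σ.Cur → σ.Nxt → ℝ}
    (hp : ∀ d, 0 < p d) (hpT : σ.Consistent p T) (X : Finset σ.CurV) (j : σ.NxtV) :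
    ¬ CondIndep p (X.image Sum.inl) {Sum.inr j} (σ.curVars \ X.image Sum.inl) ↔
      ∃ v ∈ X, σ.DependsOn (σ.coordKer T j.1 j.2) v.1 v.2 := by
  rw [condIndep_iff_coordKer_eq_of_agreeOn_compl hp hpT, forall_agreeOn_compl_imp_eq_iff]
  simp only [not_forall, not_not, exists_prop]

lemma swapCur_apply_left (l : Fin σ.K) (r r' : Fin (σ.Nk l)) (w : σ.Cur) :
    σ.swapCur ⟨l, r⟩ ⟨l, r'⟩ rfl w ⟨l, r⟩ = w ⟨l, r'⟩ :=
  eq_of_heq ((cast_heq _ _).trans (by rw [Equiv.swap_apply_left]))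

lemma swapCur_apply_right (l : Fin σ.K) (r r' : Fin (σ.Nk l)) (w : σ.Cur) :
    σ.swapCur ⟨l, r⟩ ⟨l, r'⟩ rfl w ⟨l, r'⟩ = w ⟨l, r⟩ :=
  eq_of_heq ((cast_heq _ _).trans (by rw [Equiv.swap_apply_right]))

lemma swapCur_apply_of_ne_of_ne {l : Fin σ.K} {r r' : Fin (σ.Nk l)} {o : σ.ObjIdx} (w : σ.Cur)
    (hr : o ≠ ⟨l, r⟩) (hr' : o ≠ ⟨l, r'⟩) : σ.swapCur ⟨l, r⟩ ⟨l, r'⟩ rfl w o = w o :=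
  eq_of_heq ((cast_heq _ _).trans (by rw [Equiv.swap_apply_of_ne_of_ne hr hr']))

lemma coordKer_eq_sum_objLaw (T : σ.Cur → σ.Nxt → ℝ) (o : σ.ObjIdx) (u : σ.SF o.1)
    (w : σ.Cur) (y : σ.SVal o.1 u) :
    σ.coordKer T o u w y =
      ∑ z : (∀ u' : σ.SF o.1, σ.SVal o.1 u') with z u = y, σ.objLaw T o w z := by
  simp only [objLaw]
  rw [Finset.sum_comm]
  simp only [Finset.sum_ite_eq, Finset.mem_filter, Finset.mem_univ, true_and, coordKer]

lemma CausSym.coordKer_swapCur {T : σ.Cur → σ.Nxt → ℝ} (hT : σ.CausSym T) {i : σ.ObjIdx}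
    (u : σ.SF i.1) {k : Fin σ.K} {m m' : Fin (σ.Nk k)} (hm : (⟨k, m⟩ : σ.ObjIdx) ≠ i)
    (hm' : (⟨k, m'⟩ : σ.ObjIdx) ≠ i) (w : σ.Cur) :
    σ.coordKer T i u (σ.swapCur ⟨k, m⟩ ⟨k, m'⟩ rfl w) = σ.coordKer T i u w := by
  funext y
  simp only [coordKer_eq_sum_objLaw, hT i k m m' hm hm' w]

lemma DependsOn.of_swapCur {α : Type*} {κ : σ.Cur → α} {l : Fin σ.K} {r r' : Fin (σ.Nk l)}
    {U : σ.Fd l} (h : σ.DependsOn κ ⟨l, r⟩ U)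
    (hκ : ∀ w, κ (σ.swapCur ⟨l, r⟩ ⟨l, r'⟩ rfl w) = κ w) : σ.DependsOn κ ⟨l, r'⟩ U := by
  rcases eq_or_ne r r' with rfl | hrr'
  · exact h
  obtain ⟨w, w', hagree, hne⟩ := h
  refine ⟨σ.swapCur ⟨l, r⟩ ⟨l, r'⟩ rfl w, σ.swapCur ⟨l, r⟩ ⟨l, r'⟩ rfl w', fun o g hog => ?_,
    by rwa [hκ, hκ]⟩
  by_cases hor : o = ⟨l, r⟩
  · subst hor
    rw [swapCur_apply_left, swapCur_apply_left]
    exact hagree ⟨l, r'⟩ g fun h => hrr' (by simpa using (congrArg Sigma.fst h).symm)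
  by_cases hor' : o = ⟨l, r'⟩
  · subst hor'
    rw [swapCur_apply_right, swapCur_apply_right]
    exact hagree ⟨l, r⟩ g fun h => hog (by simp_all)
  rw [swapCur_apply_of_ne_of_ne w hor hor', swapCur_apply_of_ne_of_ne w' hor hor']
  exact hagree o g fun h => hor (congrArg Sigma.fst h)

end OOSpec

open OOSpec in
theorem oo_fmdp_class_level_causal_discovery_general
    (σ : OOSpec) (T : σ.Cur → σ.Nxt → ℝ)
    (hcaus : σ.CausSym T)
    (p : σ.Cfg → ℝ)
    (hppos : ∀ d, 0 < p d) (hpcons : σ.Consistent p T) :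
    -- local rule
    (∀ (k : Fin σ.K) (U : σ.Fd k) (V : σ.SF k),
      (∀ m : Fin (σ.Nk k), σ.DependsOn (σ.coordKer T ⟨k, m⟩ V) ⟨k, m⟩ U) ↔
      (∀ m : Fin (σ.Nk k),
        ¬ CondIndep p {Sum.inl ⟨⟨k, m⟩, U⟩} {Sum.inr ⟨⟨k, m⟩, V⟩}
          (σ.curVars \ {Sum.inl ⟨⟨k, m⟩, U⟩}))) ∧
    -- global rule
    (∀ (l : Fin σ.K) (U : σ.Fd l) (k : Fin σ.K) (V : σ.SF k),
      (∀ m : Fin (σ.Nk k), ∃ r : Fin (σ.Nk l), (⟨l, r⟩ : σ.ObjIdx) ≠ ⟨k, m⟩) →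
      ((∀ (m : Fin (σ.Nk k)) (r : Fin (σ.Nk l)), (⟨l, r⟩ : σ.ObjIdx) ≠ ⟨k, m⟩ →
          σ.DependsOn (σ.coordKer T ⟨k, m⟩ V) ⟨l, r⟩ U) ↔
       (∀ m : Fin (σ.Nk k),
        ¬ CondIndep p
          ((Finset.univ.filter (fun r : Fin (σ.Nk l) => (⟨l, r⟩ : σ.ObjIdx) ≠ ⟨k, m⟩)).image
            (fun r => (Sum.inl ⟨⟨l, r⟩, U⟩ : σ.Var)))
          {Sum.inr ⟨⟨k, m⟩, V⟩}
          (σ.curVars \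
            ((Finset.univ.filter (fun r : Fin (σ.Nk l) => (⟨l, r⟩ : σ.ObjIdx) ≠ ⟨k, m⟩)).image
              (fun r => (Sum.inl ⟨⟨l, r⟩, U⟩ : σ.Var))))))) := by
  refine ⟨fun k U V => forall_congr' fun m => ?_, fun l U k V hexists => ?_⟩
  · rw [← Finset.image_singleton Sum.inl, not_condIndep_iff_exists_dependsOn hppos hpcons]
    simp
  · have hblock : ∀ m : Fin (σ.Nk k),
        (univ.filter fun r : Fin (σ.Nk l) => (⟨l, r⟩ : σ.ObjIdx) ≠ ⟨k, m⟩).image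
          (fun r => (Sum.inl ⟨⟨l, r⟩, U⟩ : σ.Var)) =
        ((univ.filter fun r : Fin (σ.Nk l) => (⟨l, r⟩ : σ.ObjIdx) ≠ ⟨k, m⟩).image
          fun r => (⟨⟨l, r⟩, U⟩ : σ.CurV)).image Sum.inl :=
      fun m => (Finset.image_image ..).symm
    simp only [hblock, not_condIndep_iff_exists_dependsOn hppos hpcons, Finset.exists_mem_image,
      Finset.mem_filter, Finset.mem_univ, true_and]
    constructor
    · intro hdep m
      obtain ⟨r, hr⟩ := hexists m
      exact ⟨r, hr, hdep m r hr⟩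
    · rintro h m r hr
      obtain ⟨r₀, hr₀, hdep⟩ := h m
      exact hdep.of_swapCur (hcaus.coordKer_swapCur V hr₀ hr)

open OOSpec in
/-- In an OO-FMDP with independent transitions, result symmetry and
causation symmetry, and for any full-support consistent pmf `p`: the class-level local
causality C.U → C.V holds iff the corresponding conditional independence fails for every
instance, and (provided every instance of the target class sees at least one distinct
instance of the source class) the class-level global causality C_k.U ⇒ C.V holds iff for
every target instance the whole source block fails to be conditionally independent of its
next-step attribute given all remaining current-step coordinates. -/
theorem oo_fmdp_class_level_causal_discovery
    (σ : OOSpec) (T : σ.Cur → σ.Nxt → ℝ)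
    (hT0 : ∀ w x', 0 ≤ T w x') (hT1 : ∀ w, ∑ x', T w x' = 1)
    (hind : σ.IndepTrans T) (hres : σ.ResultSym T) (hcaus : σ.CausSym T)
    (p : σ.Cfg → ℝ)
    (hppos : ∀ d, 0 < p d) (hpsum : ∑ d, p d = 1) (hpcons : σ.Consistent p T) :
    -- local rule
    (∀ (k : Fin σ.K) (U : σ.Fd k) (V : σ.SF k),
      (∀ m : Fin (σ.Nk k), σ.DependsOn (σ.coordKer T ⟨k, m⟩ V) ⟨k, m⟩ U) ↔
      (∀ m : Fin (σ.Nk k),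
        ¬ CondIndep p {Sum.inl ⟨⟨k, m⟩, U⟩} {Sum.inr ⟨⟨k, m⟩, V⟩}
          (σ.curVars \ {Sum.inl ⟨⟨k, m⟩, U⟩}))) ∧
    -- global rule
    (∀ (l : Fin σ.K) (U : σ.Fd l) (k : Fin σ.K) (V : σ.SF k),
      (∀ m : Fin (σ.Nk k), ∃ r : Fin (σ.Nk l), (⟨l, r⟩ : σ.ObjIdx) ≠ ⟨k, m⟩) →
      ((∀ (m : Fin (σ.Nk k)) (r : Fin (σ.Nk l)), (⟨l, r⟩ : σ.ObjIdx) ≠ ⟨k, m⟩ →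
          σ.DependsOn (σ.coordKer T ⟨k, m⟩ V) ⟨l, r⟩ U) ↔
       (∀ m : Fin (σ.Nk k),
        ¬ CondIndep p
          ((Finset.univ.filter (fun r : Fin (σ.Nk l) => (⟨l, r⟩ : σ.ObjIdx) ≠ ⟨k, m⟩)).image
            (fun r => (Sum.inl ⟨⟨l, r⟩, U⟩ : σ.Var)))
          {Sum.inr ⟨⟨k, m⟩, V⟩}
          (σ.curVars \
            ((Finset.univ.filter (fun r : Fin (σ.Nk l) => (⟨l, r⟩ : σ.ObjIdx) ≠ ⟨k, m⟩)).image
              (fun r => (Sum.inl ⟨⟨l, r⟩, U⟩ : σ.Var))))))) :=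
  oo_fmdp_class_level_causal_discovery_general σ T hcaus p hppos hpcons
end
end
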